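/- arXiv:1811.02123 — 4 statements merged into one kernel-verified Lean document; each statement's English description precedes it below -/
import Mathlib

section
/- For real numbers p, q and tangent vector components (ẋ, ẏ) ≠ (0,0), if p² + q² < 1/3, then p·ẋ + q·ẏ < (1/2)·√((1+p²)ẋ² + 2pq·ẋẏ + (1+q²)ẏ²). -/
/-!
Write `w = (p, q)`, `v = (ẋ, ẏ)` and `β = ⟪w, v⟫`. The metric induced on the graph of `v ↦ ⟪w, v⟫`
is `α² = ‖v‖² + β²`, so `2β < α` reduces to `3β² < ‖v‖²`, which is Cauchy–Schwarz
`β² ≤ ‖w‖² ‖v‖²` together with `3‖w‖² < 1` and `v ≠ 0`.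
-/

open Real RealInnerProductSpace

theorem lt_half_sqrt_add_sq_of_three_mul_sq_lt {b s : ℝ} (h : 3 * b ^ 2 < s) :
    b < 1 / 2 * √(s + b ^ 2) := by
  have h2 : 2 * |b| < √(s + b ^ 2) := by
    rw [Real.lt_sqrt (by positivity), mul_pow, sq_abs]
    linarith
  linarith [le_abs_self b]

theorem inner_lt_half_sqrt_norm_sq_add_inner_sq {E : Type*} [NormedAddCommGroup E]
    [InnerProductSpace ℝ E] {w v : E} (hw : 3 * ‖w‖ ^ 2 < 1) (hv : v ≠ 0) :
    ⟪w, v⟫ < 1 / 2 * √(‖v‖ ^ 2 + ⟪w, v⟫ ^ 2) := by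
  apply lt_half_sqrt_add_sq_of_three_mul_sq_lt
  have hcs : ⟪w, v⟫ ^ 2 ≤ ‖w‖ ^ 2 * ‖v‖ ^ 2 := by
    rw [← mul_pow, ← sq_abs]
    exact pow_le_pow_left₀ (abs_nonneg _) (abs_real_inner_le_norm w v) 2
  have hv2 : 0 < ‖v‖ ^ 2 := by positivity
  nlinarith

theorem slope_convexity_plane (p q xd yd : ℝ)
    (hne : (xd, yd) ≠ (0, 0))
    (h : p ^ 2 + q ^ 2 < 1 / 3) :
    p * xd + q * yd <
      (1 / 2) * Real.sqrt ((1 + p ^ 2) * xd ^ 2 + 2 * p * q * xd * yd + (1 + q ^ 2) * yd ^ 2) := by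
  set w : EuclideanSpace ℝ (Fin 2) := !₂[p, q]
  set v : EuclideanSpace ℝ (Fin 2) := !₂[xd, yd]
  have hinner : ⟪w, v⟫ = p * xd + q * yd := by
    simp only [w, v, PiLp.inner_apply, RCLike.inner_apply, conj_trivial, Fin.sum_univ_two,
      Matrix.cons_val_zero, Matrix.cons_val_one]
    ring
  have hnorm {a b : ℝ} : ‖!₂[a, b]‖ ^ 2 = a ^ 2 + b ^ 2 := by
    simp [EuclideanSpace.norm_sq_eq, Fin.sum_univ_two]
  have hv : v ≠ 0 := by
    intro hv0
    apply hne
    simpa [v] using congrArg (fun u : EuclideanSpace ℝ (Fin 2) => (u 0, u 1)) hv0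
  have hgraph := inner_lt_half_sqrt_norm_sq_add_inner_sq (w := w) (by rw [hnorm]; linarith) hv
  rw [hinner, hnorm] at hgraph
  convert hgraph using 3
  ring
end

section
/- Let f: ℝ² → ℝ be differentiable at a point with partial derivatives f_x, f_y, with (f_x, f_y) ≠ (0,0). Then the condition that f_x·ẋ + f_y·ẏ < (1/2)·√((1+f_x²)ẋ² + 2 f_x f_y ẋẏ + (1+f_y²)ẏ²) holds for all (ẋ, ẏ) ≠ (0,0) is equivalent to f_x² + f_y² < 1/3. -/
/-!
With `g = (f_x, f_y)` and `v = (ẋ, ẏ)`, the quadratic form is `α² = ‖v‖² + β²` where `β = ⟪g, v⟫`.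
For `β > 0`, squaring turns `β < α / 2` into `3β² < ‖v‖²`. By Cauchy–Schwarz `β² ≤ ‖g‖²‖v‖²`,
with equality at `v = g`, so this holds for every `v ≠ 0` exactly when `3‖g‖² < 1`.
-/

open Real RealInnerProductSpace

theorem lt_half_mul_sqrt_add_sq_iff {s β : ℝ} (hs : 0 < s) :
    β < 1 / 2 * √(s + β ^ 2) ↔ β ≤ 0 ∨ 3 * β ^ 2 < s := by
  rcases le_or_gt β 0 with hβ | hβ
  · have := sqrt_pos.2 (by positivity : 0 < s + β ^ 2)
    simp only [hβ, true_or, iff_true]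
    linarith
  · have : β < 1 / 2 * √(s + β ^ 2) ↔ (2 * β) ^ 2 < s + β ^ 2 := by
      rw [← lt_sqrt (by positivity)]
      constructor <;> intro h <;> linarith
    rw [this]
    simp only [hβ.not_ge, false_or]
    constructor <;> intro h <;> linarith

theorem forall_inner_lt_half_mul_sqrt_iff {E : Type*} [NormedAddCommGroup E]
    [InnerProductSpace ℝ E] (g : E) :
    (∀ v ≠ 0, ⟪g, v⟫ < 1 / 2 * √(‖v‖ ^ 2 + ⟪g, v⟫ ^ 2)) ↔ 3 * ‖g‖ ^ 2 < 1 := by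
  constructor
  · intro h
    rcases eq_or_ne g 0 with rfl | hg
    · simp
    have hg' : 0 < ‖g‖ := norm_pos_iff.2 hg
    have at_g := (lt_half_mul_sqrt_add_sq_iff (by positivity)).1 (h g hg)
    rw [real_inner_self_eq_norm_sq] at at_g
    rcases at_g with h_nonpos | h_lt
    · exact absurd h_nonpos (not_le.2 (by positivity))
    · nlinarith
  · intro h v hv
    have hv' : 0 < ‖v‖ := norm_pos_iff.2 hv
    refine (lt_half_mul_sqrt_add_sq_iff (by positivity)).2 (Or.inr ?_)
    have cauchy_schwarz : ⟪g, v⟫ ^ 2 ≤ ‖g‖ ^ 2 * ‖v‖ ^ 2 := by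
      rw [← mul_pow, ← sq_abs]
      exact pow_le_pow_left₀ (abs_nonneg _) (abs_real_inner_le_norm g v) 2
    calc 3 * ⟪g, v⟫ ^ 2 ≤ 3 * ‖g‖ ^ 2 * ‖v‖ ^ 2 := by linarith
      _ < ‖v‖ ^ 2 := by nlinarith [pow_pos hv' 2]

theorem slope_convexity_criterion_general (fx fy : ℝ) :
    (∀ xd yd : ℝ, (xd, yd) ≠ (0, 0) →
        fx * xd + fy * yd <
          (1 / 2) * Real.sqrt ((1 + fx ^ 2) * xd ^ 2 + 2 * fx * fy * xd * yd
            + (1 + fy ^ 2) * yd ^ 2)) ↔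
      fx ^ 2 + fy ^ 2 < 1 / 3 := by
  have hform : ∀ xd yd : ℝ, (1 + fx ^ 2) * xd ^ 2 + 2 * fx * fy * xd * yd + (1 + fy ^ 2) * yd ^ 2
      = xd ^ 2 + yd ^ 2 + (fx * xd + fy * yd) ^ 2 := fun _ _ => by ring
  have key := forall_inner_lt_half_mul_sqrt_iff (WithLp.toLp 2 (fx, fy))
  rw [← (WithLp.equiv 2 (ℝ × ℝ)).symm.forall_congr_right] at key
  simp only [Prod.forall, WithLp.equiv_symm_apply, ne_eq, WithLp.toLp_eq_zero, Prod.mk_eq_zero,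
    WithLp.prod_norm_sq_eq_of_L2, WithLp.prod_inner_apply, WithLp.toLp_fst, WithLp.toLp_snd,
    RCLike.inner_apply', conj_trivial, Real.norm_eq_abs, sq_abs] at key
  simp only [hform, ne_eq, Prod.mk.injEq, key]
  constructor <;> intro h <;> linarith

theorem slope_convexity_criterion (f : ℝ × ℝ → ℝ) (P : ℝ × ℝ) (fx fy : ℝ)
    (hdiff : HasFDerivAt f (fx • (ContinuousLinearMap.fst ℝ ℝ ℝ) +
      fy • (ContinuousLinearMap.snd ℝ ℝ ℝ)) P)
    (hne : (fx, fy) ≠ (0, 0)) :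
    (∀ xd yd : ℝ, (xd, yd) ≠ (0, 0) →
        fx * xd + fy * yd <
          (1 / 2) * Real.sqrt ((1 + fx ^ 2) * xd ^ 2 + 2 * fx * fy * xd * yd
            + (1 + fy ^ 2) * yd ^ 2)) ↔
      fx ^ 2 + fy ^ 2 < 1 / 3 :=
  slope_convexity_criterion_general fx fy
end

section
/- The function g(b) = (2 − 3b²)/(2(1−b²)√(1−b²)) is strictly monotone decreasing on (0, 1/2), with values in (5√3/9, 1). -/
/-!
With `u = 1 / √(1 - b²)` one has `1 - b² = u⁻²`, and the density becomes the cubic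
`(3u - u³) / 2`. The map `b ↦ u` increases from `1` on `[0, 1)`, while
`(3v - v³) - (3u - u³) = -(v - u)(u² + uv + v² - 3) < 0` for `1 ≤ u < v` shows that the cubic
decreases on `[1, ∞)`. The bounds are the values `1` at `b = 0` and `5√3/9` at `b = 1/2`.
-/

open Real Set

noncomputable def htDensity (b : ℝ) : ℝ :=
  (2 - 3 * b ^ 2) / (2 * (1 - b ^ 2) * √(1 - b ^ 2))

lemma strictAntiOn_three_mul_sub_pow_three_div_two :
    StrictAntiOn (fun u : ℝ => (3 * u - u ^ 3) / 2) (Ici 1) := by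
  intro u (hu : 1 ≤ u) v (hv : 1 ≤ v) huv
  have hfactor : (3 * v - v ^ 3) - (3 * u - u ^ 3) = -(v - u) * (u ^ 2 + u * v + v ^ 2 - 3) := by
    ring
  have hpos : 0 < (v - u) * (u ^ 2 + u * v + v ^ 2 - 3) :=
    mul_pos (sub_pos.2 huv) (by nlinarith)
  dsimp only
  linarith

lemma htDensity_eq_of_sq_lt_one {b : ℝ} (hb : b ^ 2 < 1) :
    htDensity b = (3 * (√(1 - b ^ 2))⁻¹ - (√(1 - b ^ 2))⁻¹ ^ 3) / 2 := by
  have hpos : 0 < 1 - b ^ 2 := sub_pos.2 hb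
  have hs : 0 < √(1 - b ^ 2) := sqrt_pos.2 hpos
  have hsq : √(1 - b ^ 2) ^ 2 = 1 - b ^ 2 := sq_sqrt hpos.le
  rw [htDensity]
  field_simp
  linear_combination -hsq

lemma strictMonoOn_inv_sqrt_one_sub_sq :
    StrictMonoOn (fun b : ℝ => (√(1 - b ^ 2))⁻¹) (Ico 0 1) := by
  intro a ⟨ha0, ha1⟩ b ⟨_, hb1⟩ hab
  have hb : 0 < 1 - b ^ 2 := by nlinarith
  exact inv_strictAnti₀ (sqrt_pos.2 hb) (sqrt_lt_sqrt hb.le (by nlinarith))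

lemma one_le_inv_sqrt_one_sub_sq {b : ℝ} (hb : b ^ 2 < 1) : 1 ≤ (√(1 - b ^ 2))⁻¹ :=
  (one_le_inv₀ (sqrt_pos.2 (sub_pos.2 hb))).2 (sqrt_le_one.2 (sub_le_self 1 (sq_nonneg b)))

lemma htDensity_strictAntiOn : StrictAntiOn htDensity (Ico 0 1) := by
  intro a ha b hb hab
  have hsq {c : ℝ} (hc : c ∈ Ico (0 : ℝ) 1) : c ^ 2 < 1 := by nlinarith [hc.1, hc.2]
  rw [htDensity_eq_of_sq_lt_one (hsq ha), htDensity_eq_of_sq_lt_one (hsq hb)]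
  exact strictAntiOn_three_mul_sub_pow_three_div_two (one_le_inv_sqrt_one_sub_sq (hsq ha))
    (one_le_inv_sqrt_one_sub_sq (hsq hb)) (strictMonoOn_inv_sqrt_one_sub_sq ha hb hab)

lemma htDensity_zero : htDensity 0 = 1 := by
  norm_num [htDensity]

lemma htDensity_one_half : htDensity (1 / 2) = 5 * √3 / 9 := by
  have h3 : √3 ^ 2 = 3 := sq_sqrt (by norm_num)
  have hsqrt : √(1 - (1 / 2 : ℝ) ^ 2) = √3 / 2 := by
    rw [show (1 - (1 / 2 : ℝ) ^ 2) = 3 / 2 ^ 2 by norm_num, sqrt_div' _ (by norm_num),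
      sqrt_sq (by norm_num)]
  rw [htDensity, hsqrt]
  field_simp
  linear_combination (-15) * h3

theorem HT_density_decreasing :
    StrictAntiOn (fun b : ℝ => (2 - 3 * b ^ 2) / (2 * (1 - b ^ 2) * Real.sqrt (1 - b ^ 2)))
      (Set.Ioo 0 (1 / 2)) ∧
    ∀ b ∈ Set.Ioo (0 : ℝ) (1 / 2),
      (2 - 3 * b ^ 2) / (2 * (1 - b ^ 2) * Real.sqrt (1 - b ^ 2)) ∈
        Set.Ioo (5 * Real.sqrt 3 / 9) 1 := by
  have hzero : (0 : ℝ) ∈ Ico 0 1 := by norm_num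
  have hhalf : (1 / 2 : ℝ) ∈ Ico 0 1 := by norm_num
  have hsub : Ioo (0 : ℝ) (1 / 2) ⊆ Ico 0 1 :=
    Ioo_subset_Ico_self.trans (Ico_subset_Ico_right (by norm_num))
  refine ⟨htDensity_strictAntiOn.mono hsub, fun b hb => ⟨?_, ?_⟩⟩
  · have := htDensity_strictAntiOn (hsub hb) hhalf hb.2
    rwa [htDensity_one_half] at this
  · have := htDensity_strictAntiOn hzero (hsub hb) hb.1
    rwa [htDensity_zero] at this
end

section
/- The function h(b) = (2+b²)(2−3b²)/(4(1−b²)√(1−b²)) is strictly monotone increasing on (0, 1/2), with values in (1, 5√3/8). -/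
/-!
In the variable `s = √(1 - b²)` the ratio becomes the rational function
`φ s = (3 - s²)(3s² - 1) / (4s³)` (`densityRatioCos`). Since
`φ s - φ t = (t - s)(3s³t³ + 10s²t² - 3(s² + st + t²)) / (4s³t³)` and the second factor is
positive once `s², t² ≥ 3/4`, `φ` is strictly decreasing on `[√3/2, ∞)`. As `b` increases through
`(0, 1/2)`, `s` decreases through `(√3/2, 1)`, and `φ 1 = 1`, `φ (√3/2) = 5√3/8`.
-/

open Real Set

noncomputable def densityRatioCos (s : ℝ) : ℝ := (3 - s ^ 2) * (3 * s ^ 2 - 1) / (4 * s ^ 3)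

lemma three_mul_sq_add_mul_add_sq_lt {s t : ℝ} (hs : 0 < s) (ht : 0 < t)
    (hs2 : 3 / 4 ≤ s ^ 2) (ht2 : 3 / 4 ≤ t ^ 2) :
    3 * (s ^ 2 + s * t + t ^ 2) < 3 * (s * t) ^ 3 + 10 * (s * t) ^ 2 := by
  have hp : 3 / 4 ≤ s * t := by nlinarith [mul_pos hs ht]
  nlinarith [mul_le_mul hs2 ht2 (by norm_num) (sq_nonneg s), mul_pos hs ht]

lemma densityRatioCos_strictAntiOn : StrictAntiOn densityRatioCos (Ici (√3 / 2)) := by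
  have hsq : ∀ x ∈ Ici (√3 / 2), 0 < x ∧ 3 / 4 ≤ x ^ 2 := by
    intro x hx
    have h3 : 0 < √3 / 2 := by positivity
    refine ⟨h3.trans_le hx, ?_⟩
    calc 3 / 4 = (√3 / 2) ^ 2 := by rw [div_pow, sq_sqrt (by norm_num)]; norm_num
      _ ≤ x ^ 2 := pow_le_pow_left₀ h3.le hx 2
  intro s hs t ht hst
  obtain ⟨hs0, hs2⟩ := hsq s hs
  obtain ⟨ht0, ht2⟩ := hsq t ht
  have key := three_mul_sq_add_mul_add_sq_lt hs0 ht0 hs2 ht2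
  unfold densityRatioCos
  rw [div_lt_div_iff₀ (by positivity) (by positivity)]
  nlinarith [mul_pos (sub_pos.2 hst) (sub_pos.2 key)]

lemma densityRatioCos_one : densityRatioCos 1 = 1 := by
  norm_num [densityRatioCos]

lemma densityRatioCos_sqrt_three_div_two : densityRatioCos (√3 / 2) = 5 * √3 / 8 := by
  have h3 : √3 ^ 2 = 3 := sq_sqrt (by norm_num)
  have h3' : √3 ^ 3 = 3 * √3 := by rw [pow_succ, h3]
  have : 0 < √3 := by positivity
  unfold densityRatioCos
  rw [div_pow, div_pow, h3, h3', div_eq_iff (by positivity)]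
  field_simp
  nlinarith

lemma ratio_eq_densityRatioCos_sqrt (b : ℝ) :
    (2 + b ^ 2) * (2 - 3 * b ^ 2) / (4 * (1 - b ^ 2) * √(1 - b ^ 2))
      = densityRatioCos √(1 - b ^ 2) := by
  unfold densityRatioCos
  rcases le_or_gt (b ^ 2) 1 with hb | hb
  · have hs : √(1 - b ^ 2) ^ 2 = 1 - b ^ 2 := sq_sqrt (by linarith)
    have hs3 : √(1 - b ^ 2) ^ 3 = (1 - b ^ 2) * √(1 - b ^ 2) := by rw [pow_succ, hs, mul_comm]
    rw [hs3, hs]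
    congr 1 <;> ring
  · rw [sqrt_eq_zero_of_nonpos (by linarith)]
    simp

lemma sqrt_one_sub_sq_strictAntiOn : StrictAntiOn (fun b : ℝ => √(1 - b ^ 2)) (Icc 0 1) :=
  fun a ha b hb hab => sqrt_lt_sqrt (by nlinarith [hb.2, hb.1]) (by nlinarith [ha.1])

lemma sqrt_one_sub_sq_mem_Ioo {b : ℝ} (hb : b ∈ Ioo (0 : ℝ) (1 / 2)) :
    √(1 - b ^ 2) ∈ Ioo (√3 / 2) 1 := by
  obtain ⟨hb0, hb1⟩ := hb
  constructor
  · rw [show √3 / 2 = √(3 / 4) by rw [sqrt_div' _ (by norm_num : (0:ℝ) ≤ 4)]; norm_num]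
    exact sqrt_lt_sqrt (by norm_num) (by nlinarith)
  · rw [sqrt_lt' one_pos]
    nlinarith

theorem ratio_density_increasing :
    StrictMonoOn
      (fun b : ℝ => (2 + b ^ 2) * (2 - 3 * b ^ 2) / (4 * (1 - b ^ 2) * Real.sqrt (1 - b ^ 2)))
      (Set.Ioo 0 (1 / 2)) ∧
    ∀ b ∈ Set.Ioo (0 : ℝ) (1 / 2),
      (2 + b ^ 2) * (2 - 3 * b ^ 2) / (4 * (1 - b ^ 2) * Real.sqrt (1 - b ^ 2)) ∈
        Set.Ioo 1 (5 * Real.sqrt 3 / 8) := by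
  simp only [ratio_eq_densityRatioCos_sqrt]
  have hs : ∀ b ∈ Ioo (0 : ℝ) (1 / 2), √(1 - b ^ 2) ∈ Ici (√3 / 2) :=
    fun b hb => (sqrt_one_sub_sq_mem_Ioo hb).1.le
  have hIcc : Ioo (0 : ℝ) (1 / 2) ⊆ Icc 0 1 := fun b hb => ⟨hb.1.le, by linarith [hb.2]⟩
  have h1 : (1 : ℝ) ∈ Ici (√3 / 2) := by
    rw [mem_Ici, div_le_one two_pos, sqrt_le_left two_pos.le]
    norm_num
  refine ⟨densityRatioCos_strictAntiOn.comp
    (sqrt_one_sub_sq_strictAntiOn.mono hIcc) hs, fun b hb => ⟨?_, ?_⟩⟩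
  · nth_rw 1 [← densityRatioCos_one]
    exact densityRatioCos_strictAntiOn (hs b hb) h1 (sqrt_one_sub_sq_mem_Ioo hb).2
  · rw [← densityRatioCos_sqrt_three_div_two]
    exact densityRatioCos_strictAntiOn self_mem_Ici (hs b hb) (sqrt_one_sub_sq_mem_Ioo hb).1
end
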